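/- Let R be a commutative ring, 𝔞 an ideal, and M, N R-modules. If either M or N is 𝔞-coreduced (𝔞²M = 𝔞M, respectively 𝔞²N = 𝔞N), then M ⊗_R N is 𝔞-coreduced, i.e., 𝔞²(M ⊗_R N) = 𝔞(M ⊗_R N). -/
import Mathlib


open TensorProduct

/-- An `R`-module `P` is `𝔞`-coreduced if `𝔞²P = 𝔞P`. -/
def IsACoreduced {R : Type*} [CommRing R] (𝔞 : Ideal R) (P : Type*) [AddCommGroup P]
    [Module R P] : Prop :=
  (𝔞 ^ 2) • (⊤ : Submodule R P) = 𝔞 • (⊤ : Submodule R P)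

/-- if `M` or `N` is `𝔞`-coreduced, then so is `M ⊗_R N`. -/
theorem tensor_isACoreduced {R : Type*} [CommRing R] (𝔞 : Ideal R)
    (M N : Type*) [AddCommGroup M] [Module R M] [AddCommGroup N] [Module R N]
    (h : IsACoreduced 𝔞 M ∨ IsACoreduced 𝔞 N) :
    IsACoreduced 𝔞 (M ⊗[R] N) := by
  apply le_antisymm
  · exact Submodule.smul_mono_left (Ideal.pow_le_self two_ne_zero)
  · rw [Submodule.smul_le]
    intro a ha t _
    induction t with
    | zero => simp
    | add x y hx hy => rw [smul_add]; exact Submodule.add_mem _ (hx trivial) (hy trivial)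
    | tmul m n =>
      rcases h with hM | hN
      · rw [TensorProduct.smul_tmul']
        have hm : a • m ∈ (𝔞 ^ 2) • (⊤ : Submodule R M) := by
          rw [hM]; exact Submodule.smul_mem_smul ha trivial
        refine Submodule.smul_induction_on hm ?_ ?_
        · intro b hb x _
          rw [← TensorProduct.smul_tmul']
          exact Submodule.smul_mem_smul hb trivial
        · intro x y hx hy
          rw [TensorProduct.add_tmul]
          exact Submodule.add_mem _ hx hy
      · have : a • (m ⊗ₜ[R] n) = m ⊗ₜ[R] (a • n) := by
          rw [TensorProduct.tmul_smul]
        rw [this]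
        have hn : a • n ∈ (𝔞 ^ 2) • (⊤ : Submodule R N) := by
          rw [hN]; exact Submodule.smul_mem_smul ha trivial
        refine Submodule.smul_induction_on hn ?_ ?_
        · intro b hb x _
          rw [TensorProduct.tmul_smul]
          exact Submodule.smul_mem_smul hb trivial
        · intro x y hx hy
          rw [TensorProduct.tmul_add]
          exact Submodule.add_mem _ hx hy
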